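/- Fix N, d ∈ ℕ. Let w_i ∈ ℝ^N converge to w ∈ ℝ^N, and let p_i be polynomials in N variables over ℂ of total degree ≤ d, with p_i being w_i-homogeneous for each i, whose coefficients converge to the coefficients of a nonzero polynomial p of total degree ≤ d. Then for all sufficiently large i, the polynomial p is w_i-homogeneous. -/

import Mathlib

open Filter Topology

/-- A polynomial is `w`-homogeneous if all monomials in its support have the
same weighted degree with respect to the weight vector `w`. -/
def WeightedHomogeneous {N : ℕ} (w : Fin N → ℝ) (p : MvPolynomial (Fin N) ℂ) : Prop :=
  ∃ μ : ℝ, ∀ α ∈ p.support, (∑ j, (α j : ℝ) * w j) = μ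

theorem MvPolynomial.eventually_support_subset_of_tendsto_coeff {σ R ι : Type*}
    [CommSemiring R] [TopologicalSpace R] [T1Space R] {l : Filter ι}
    {p : ι → MvPolynomial σ R} {q : MvPolynomial σ R}
    (h : ∀ α, Tendsto (fun i => (p i).coeff α) l (𝓝 (q.coeff α))) :
    ∀ᶠ i in l, q.support ⊆ (p i).support := by
  simp only [Finset.subset_iff]
  rw [eventually_all_finset]
  intro α hα
  filter_upwards [(h α).eventually_ne (MvPolynomial.mem_support_iff.mp hα)] with i hi
  exact MvPolynomial.mem_support_iff.mpr hi

theorem WeightedHomogeneous.of_support_subset {N : ℕ} {w : Fin N → ℝ}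
    {p q : MvPolynomial (Fin N) ℂ} (hp : WeightedHomogeneous w p)
    (hqp : q.support ⊆ p.support) : WeightedHomogeneous w q :=
  let ⟨μ, hμ⟩ := hp
  ⟨μ, fun α hα => hμ α (hqp hα)⟩

theorem stmt14_general (N : ℕ) (w : ℕ → Fin N → ℝ)
    (p : ℕ → MvPolynomial (Fin N) ℂ) (pinf : MvPolynomial (Fin N) ℂ)
    (hhom : ∀ i, WeightedHomogeneous (w i) (p i))
    (hcoeff : ∀ α : Fin N →₀ ℕ,
      Tendsto (fun i => (p i).coeff α) atTop (𝓝 (pinf.coeff α))) :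
    ∀ᶠ i in atTop, WeightedHomogeneous (w i) pinf := by
  filter_upwards [MvPolynomial.eventually_support_subset_of_tendsto_coeff hcoeff] with i hi
  exact (hhom i).of_support_subset hi

theorem stmt14 (N d : ℕ) (w : ℕ → Fin N → ℝ) (winf : Fin N → ℝ)
    (hw : Tendsto w atTop (𝓝 winf))
    (p : ℕ → MvPolynomial (Fin N) ℂ) (pinf : MvPolynomial (Fin N) ℂ)
    (hdeg : ∀ i, (p i).totalDegree ≤ d) (hdeginf : pinf.totalDegree ≤ d)
    (hhom : ∀ i, WeightedHomogeneous (w i) (p i))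
    (hcoeff : ∀ α : Fin N →₀ ℕ,
      Tendsto (fun i => (p i).coeff α) atTop (𝓝 (pinf.coeff α)))
    (hne : pinf ≠ 0) :
    ∀ᶠ i in atTop, WeightedHomogeneous (w i) pinf :=
  stmt14_general N w p pinf hhom hcoeff
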